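/- The Hausdorff dimension of the product set Can₀ × Can₀, viewed as a subset of ℝ², equals 2·log 2 / log 3, where Can₀ = {q ∈ [0,1) : for every n ∈ ℕ, ⌊3^{n+1}·q⌋ mod 3 ≠ 1}. -/

import Mathlib

/-- The Cantor-like set `Can₀` of points of `[0,1)` all of whose ternary digits
(in the floor convention `digit_n(q) = ⌊3^{n+1}·q⌋ mod 3`) differ from `1`. -/
def Can0 : Set ℝ :=
  {q : ℝ | q ∈ Set.Ico (0 : ℝ) 1 ∧ ∀ n : ℕ, ⌊(3 : ℝ) ^ (n + 1) * q⌋ % 3 ≠ 1}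

/-!
Upper bound: the points of `Can0` with prescribed first `n` ternary digits form a set of
diameter at most `3⁻ⁿ`, and only the `2ⁿ` strings of digits `0, 2` occur, so `Can0 × Can0` is
covered by `4ⁿ` sets of diameter `3⁻ⁿ` and has dimension at most `log 4 / log 3`.

Lower bound: the Cantor function, reading the ternary digits `0, 2` of a point of `Can0` as binary
digits `0, 1`, maps `Can0` onto `[0,1)` and is Hölder of exponent `log 2 / log 3` there: points
whose digits first differ at place `k` are at least `3^-(k+1)` apart, while their images are within
`2⁻ᵏ`. So the square `[0,1)²`, of dimension `2`, is a Hölder image of `Can0 × Can0`.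
-/

open Set Filter Topology MeasureTheory Metric
open scoped NNReal ENNReal

namespace Real

variable {b : ℕ}

theorem ofDigits_lt_one {a : ℕ → Fin b} (h : ∃ i, (a i : ℕ) ≠ b - 1) : ofDigits a < 1 := by
  obtain ⟨i, hi⟩ := h
  have hb : 1 < b := by have := (a i).isLt; omega
  rw [← ofDigits_const_last_eq_one' hb]
  refine Summable.tsum_lt_tsum (i := i) (fun j => ?_) ?_ summable_ofDigitsTerm
    summable_ofDigitsTerm <;> simp only [ofDigitsTerm]
  · gcongr
    exact_mod_cast Nat.le_sub_one_of_lt (a j).isLt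
  · gcongr
    exact_mod_cast lt_of_le_of_ne (Nat.le_sub_one_of_lt (a i).isLt) hi

theorem ofDigits_sub_ofDigits {k : ℕ} {x y : ℕ → Fin b} (h : ∀ i < k, x i = y i) :
    ofDigits y - ofDigits x = ((b : ℝ) ^ (k + 1))⁻¹ * ((y k : ℝ) - x k +
      ofDigits (fun i => y (i + (k + 1))) - ofDigits (fun i => x (i + (k + 1)))) := by
  have hsum : ∑ i ∈ Finset.range k, ofDigitsTerm x i = ∑ i ∈ Finset.range k, ofDigitsTerm y i :=
    Finset.sum_congr rfl fun i hi => by rw [ofDigitsTerm, h i (Finset.mem_range.mp hi), ofDigitsTerm]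
  rw [ofDigits_eq_sum_add_ofDigits x (k + 1), ofDigits_eq_sum_add_ofDigits y (k + 1),
    Finset.sum_range_succ, Finset.sum_range_succ, hsum, ofDigitsTerm, ofDigitsTerm]
  ring

theorem ofDigits_lt_ofDigits {k : ℕ} {x y : ℕ → Fin b} (h : ∀ i < k, x i = y i) (hk : x k < y k)
    (hx : ∃ i, (x (i + (k + 1)) : ℕ) ≠ b - 1) : ofDigits x < ofDigits y := by
  have hb : 0 < b := Fin.pos (x 0)
  have hlt : (x k : ℝ) + 1 ≤ y k := by exact_mod_cast hk
  have := ofDigits_lt_one hx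
  have := ofDigits_nonneg (fun i => y (i + (k + 1)))
  rw [← sub_pos, ofDigits_sub_ofDigits h]
  apply mul_pos (by positivity)
  linarith

theorem inv_pow_succ_le_abs_ofDigits_sub_ofDigits {k : ℕ} {x y : ℕ → Fin b}
    (h : ∀ i < k, x i = y i) (hk : 2 ≤ |(y k : ℝ) - x k|) :
    ((b : ℝ) ^ (k + 1))⁻¹ ≤ |ofDigits y - ofDigits x| := by
  have hb : 0 < b := Fin.pos (x 0)
  set tx := ofDigits (fun i => x (i + (k + 1)))
  set ty := ofDigits (fun i => y (i + (k + 1)))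
  have htail : |tx - ty| ≤ 1 := by
    simpa using abs_sub_le_of_le_of_le (ofDigits_nonneg _) (ofDigits_le_one _)
      (ofDigits_nonneg _) (ofDigits_le_one _)
  have := abs_sub_abs_le_abs_sub ((y k : ℝ) - x k) (tx - ty)
  rw [sub_sub_eq_add_sub] at this
  rw [ofDigits_sub_ofDigits h, abs_mul, abs_of_pos (by positivity)]
  refine le_mul_of_one_le_right (by positivity) ?_
  linarith

theorem frequently_digits_ne {x : ℝ} [NeZero b] (hb : 1 < b) (hx : x ∈ Ico 0 1) :
    ∃ᶠ i in atTop, (digits x b i : ℕ) ≠ b - 1 := by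
  intro h
  obtain ⟨n, hn⟩ := eventually_atTop.mp h
  have htail : (fun i => digits x b (i + n)) = fun _ => ⟨b - 1, Nat.sub_one_lt_of_lt hb⟩ :=
    funext fun i => Fin.ext (not_not.mp (hn (i + n) (by omega)))
  have hsplit := ofDigits_eq_sum_add_ofDigits (digits x b) n
  rw [ofDigits_digits hb hx, htail, ofDigits_const_last_eq_one' hb, mul_one] at hsplit
  have hfloor := ofDigits_digits_sum_eq (b := b) hx n
  have hlt := Nat.lt_floor_add_one ((b : ℝ) ^ n * x)
  have hpos : (0 : ℝ) < (b : ℝ) ^ n := by positivity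
  have hscaled := congrArg ((b : ℝ) ^ n * ·) hsplit
  simp only [mul_add, mul_inv_cancel₀ hpos.ne'] at hscaled
  rw [← hfloor] at hlt
  linarith

theorem ofDigits_injOn : InjOn (ofDigits (b := b)) {a | ∃ᶠ i in atTop, (a i : ℕ) ≠ b - 1} := by
  -- `toLex a < toLex c` says that the digits agree below some `k` and `a k < c k`.
  have key : ∀ {a c : ℕ → Fin b}, (∃ᶠ i in atTop, (a i : ℕ) ≠ b - 1) →
      toLex a < toLex c → ofDigits a < ofDigits c := by
    rintro a c ha ⟨k, hk, hlt⟩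
    obtain ⟨i, hne, hi⟩ := (ha.and_eventually (eventually_gt_atTop k)).exists
    refine ofDigits_lt_ofDigits hk hlt ⟨i - (k + 1), ?_⟩
    rwa [Nat.sub_add_cancel hi]
  intro a ha c hc hac
  rcases lt_trichotomy (toLex a) (toLex c) with h | h | h
  · exact absurd hac (key ha h).ne
  · exact h
  · exact absurd hac (key hc h).ne'

theorem digits_ofDigits [NeZero b] (hb : 1 < b) {a : ℕ → Fin b}
    (ha : ∃ᶠ i in atTop, (a i : ℕ) ≠ b - 1) : digits (ofDigits a) b = a := by
  obtain ⟨i, hi⟩ := ha.exists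
  have hx : ofDigits a ∈ Ico 0 1 := ⟨ofDigits_nonneg a, ofDigits_lt_one ⟨i, hi⟩⟩
  exact ofDigits_injOn (frequently_digits_ne hb hx) ha (ofDigits_digits hb hx)

end Real

theorem HolderOnWith.of_dist_le {X Y : Type*} [PseudoMetricSpace X] [PseudoMetricSpace Y]
    {C r : ℝ≥0} {f : X → Y} {s : Set X}
    (h : ∀ x ∈ s, ∀ y ∈ s, dist (f x) (f y) ≤ C * dist x y ^ (r : ℝ)) :
    HolderOnWith C r f s := by
  intro x hx y hy
  rw [edist_nndist, edist_nndist, ← ENNReal.coe_rpow_of_nonneg _ r.coe_nonneg,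
    ← ENNReal.coe_mul, ENNReal.coe_le_coe, ← NNReal.coe_le_coe]
  simpa using h x hx y hy

theorem HolderOnWith.prodMap {X Y X' Y' : Type*} [PseudoEMetricSpace X] [PseudoEMetricSpace Y]
    [PseudoEMetricSpace X'] [PseudoEMetricSpace Y'] {C r : ℝ≥0} {f : X → Y} {g : X' → Y'}
    {s : Set X} {t : Set X'} (hf : HolderOnWith C r f s) (hg : HolderOnWith C r g t) :
    HolderOnWith C r (Prod.map f g) (s ×ˢ t) := by
  rintro ⟨x, x'⟩ ⟨hx, hx'⟩ ⟨y, y'⟩ ⟨hy, hy'⟩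
  simp only [Prod.edist_eq, Prod.map_fst, Prod.map_snd]
  refine max_le ((hf x hx y hy).trans ?_) ((hg x' hx' y' hy').trans ?_) <;> gcongr
  exacts [le_max_left _ _, le_max_right _ _]

theorem dimH_le_of_forall_covering {X : Type*} [EMetricSpace X] {s : Set X} {ι : ℕ → Type*}
    [∀ n, Fintype (ι n)] {m : ℝ} {N : ℕ} (hm : 1 < m) (t : ∀ n, ι n → Set X)
    (hcard : ∀ n, Fintype.card (ι n) ≤ N ^ n)
    (hdiam : ∀ n i, ediam (t n i) ≤ ENNReal.ofReal (m ^ n)⁻¹)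
    (hcover : ∀ n, s ⊆ ⋃ i, t n i) :
    dimH s ≤ ENNReal.ofReal (Real.logb m N) := by
  borelize X
  set d := Real.logb m N
  obtain ⟨hd, hN⟩ : 0 ≤ d ∧ (N : ℝ) ≤ m ^ d := by
    rcases N.eq_zero_or_pos with rfl | hN
    · simp [d]
    · exact ⟨Real.logb_nonneg hm (by exact_mod_cast hN),
        (Real.rpow_logb (by linarith) hm.ne' (by exact_mod_cast hN)).ge⟩
  have hsum : ∀ n, ∑ i, ediam (t n i) ^ d ≤ 1 := by
    intro n
    calc ∑ i, ediam (t n i) ^ d ≤ ∑ _i : ι n, ENNReal.ofReal ((m ^ n)⁻¹) ^ d :=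
          Finset.sum_le_sum fun i _ => ENNReal.rpow_le_rpow (hdiam n i) hd
      _ = Fintype.card (ι n) * ENNReal.ofReal (((m ^ d) ^ n)⁻¹) := by
          rw [Finset.sum_const, nsmul_eq_mul, Finset.card_univ,
            ENNReal.ofReal_rpow_of_nonneg (by positivity) hd, Real.inv_rpow (by positivity),
            ← Real.rpow_pow_comm (by positivity)]
      _ ≤ ENNReal.ofReal ((N / m ^ d) ^ n) := by
          rw [div_pow, div_eq_mul_inv, ENNReal.ofReal_mul (by positivity), ← Nat.cast_pow,
            ENNReal.ofReal_natCast]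
          gcongr
          exact_mod_cast hcard n
      _ ≤ 1 := by
          rw [ENNReal.ofReal_le_one]
          exact pow_le_one₀ (by positivity) (div_le_one_of_le₀ hN (by positivity))
  have hr : Tendsto (fun n : ℕ => ENNReal.ofReal (m ^ n)⁻¹) atTop (𝓝 0) := by
    simpa using ENNReal.tendsto_ofReal
      (tendsto_inv_atTop_zero.comp (tendsto_pow_atTop_atTop_of_one_lt hm))
  have hμ : μH[(d.toNNReal : ℝ)] s ≤ 1 := by
    rw [Real.coe_toNNReal _ hd]
    exact (Measure.hausdorffMeasure_le_liminf_sum d s _ hr t (.of_forall (hdiam ·))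
      (.of_forall hcover)).trans (liminf_le_of_frequently_le' (.of_forall hsum))
  exact dimH_le_of_hausdorffMeasure_ne_top (ne_top_of_le_ne_top ENNReal.one_ne_top hμ)

open Real

theorem mem_Can0_iff {q : ℝ} : q ∈ Can0 ↔ q ∈ Ico 0 1 ∧ ∀ n, digits q 3 n ≠ 1 := by
  refine and_congr_right fun hq => forall_congr' fun n => ?_
  rw [← Int.natCast_floor_eq_floor (by have := hq.1; positivity), digits, mul_comm q]
  simp only [Nat.cast_ofNat, Ne, Fin.ext_iff, Fin.val_ofNat, Fin.val_one]
  omega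

def halveDigit (d : Fin 3) : Fin 2 := if d = 2 then 1 else 0

def doubleDigit (e : Fin 2) : Fin 3 := if e = 1 then 2 else 0

theorem halveDigit_doubleDigit (e : Fin 2) : halveDigit (doubleDigit e) = e := by
  fin_cases e <;> rfl

theorem doubleDigit_halveDigit {d : Fin 3} (hd : d ≠ 1) : doubleDigit (halveDigit d) = d := by
  fin_cases d <;> first | rfl | exact absurd rfl hd

theorem doubleDigit_ne_one (e : Fin 2) : doubleDigit e ≠ 1 := by
  fin_cases e <;> decide

theorem val_doubleDigit_ne_two {e : Fin 2} (he : (e : ℕ) ≠ 2 - 1) : (doubleDigit e : ℕ) ≠ 3 - 1 := by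
  fin_cases e <;> simp_all [doubleDigit]

noncomputable def cantorFunction (q : ℝ) : ℝ := ofDigits fun i => halveDigit (digits q 3 i)

theorem two_le_abs_sub_of_ne_one {d d' : Fin 3} (hd : d ≠ 1) (hd' : d' ≠ 1) (h : d ≠ d') :
    2 ≤ |(d : ℝ) - d'| := by
  fin_cases d <;> fin_cases d' <;> simp_all

theorem abs_cantorFunction_sub_le {q q' : ℝ} (hq : q ∈ Can0) (hq' : q' ∈ Can0) {k : ℕ}
    (hk : ∀ i < k, digits q 3 i = digits q' 3 i) (hne : digits q 3 k ≠ digits q' 3 k) :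
    |cantorFunction q - cantorFunction q'| ≤ 2 * |q - q'| ^ logb 3 2 := by
  rw [mem_Can0_iff] at hq hq'
  have hsep : ((3 : ℝ) ^ (k + 1))⁻¹ ≤ |q - q'| := by
    have := inv_pow_succ_le_abs_ofDigits_sub_ofDigits (fun i hi => (hk i hi).symm)
      (two_le_abs_sub_of_ne_one (hq.2 k) (hq'.2 k) hne)
    rwa [ofDigits_digits (by norm_num) hq.1, ofDigits_digits (by norm_num) hq'.1] at this
  have hrpow : (((3 : ℝ) ^ (k + 1))⁻¹) ^ logb 3 2 = ((2 : ℝ) ^ (k + 1))⁻¹ := by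
    rw [Real.inv_rpow (by positivity), ← Real.rpow_pow_comm (by norm_num),
      Real.rpow_logb (by norm_num) (by norm_num) (by norm_num)]
  calc |cantorFunction q - cantorFunction q'| ≤ ((2 : ℝ) ^ k)⁻¹ := by
        simpa [cantorFunction] using abs_ofDigits_sub_ofDigits_le (b := 2) (n := k)
          (x := fun i => halveDigit (digits q 3 i)) (y := fun i => halveDigit (digits q' 3 i))
          fun i hi => by rw [hk i hi]
    _ = 2 * (((3 : ℝ) ^ (k + 1))⁻¹) ^ logb 3 2 := by rw [hrpow, pow_succ]; field_simp
    _ ≤ 2 * |q - q'| ^ logb 3 2 := by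
        gcongr
        exact Real.logb_nonneg (by norm_num) (by norm_num)

theorem cantorFunction_holderOnWith :
    HolderOnWith 2 (logb 3 2).toNNReal cantorFunction Can0 := by
  refine .of_dist_le fun q hq q' hq' => ?_
  rw [Real.coe_toNNReal _ (Real.logb_nonneg (by norm_num) (by norm_num)), Real.dist_eq,
    Real.dist_eq, NNReal.coe_ofNat]
  rcases eq_or_ne (digits q 3) (digits q' 3) with h | h
  · have : q = q' := by
      rw [← ofDigits_digits (b := 3) (by norm_num) (mem_Can0_iff.mp hq).1, h,
        ofDigits_digits (by norm_num) (mem_Can0_iff.mp hq').1]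
    simp only [this, sub_self, abs_zero]
    positivity
  · rcases ne_iff_lt_or_gt.mp (show toLex (digits q 3) ≠ toLex (digits q' 3) from h) with
      ⟨k, hk, hlt⟩ | ⟨k, hk, hlt⟩
    · exact abs_cantorFunction_sub_le hq hq' hk hlt.ne
    · rw [abs_sub_comm, abs_sub_comm q]
      exact abs_cantorFunction_sub_le hq' hq hk hlt.ne

theorem Ico_subset_image_cantorFunction : Ico 0 1 ⊆ cantorFunction '' Can0 := by
  intro x hx
  set a : ℕ → Fin 3 := fun i => doubleDigit (digits x 2 i)
  have ha : ∃ᶠ i in atTop, (a i : ℕ) ≠ 3 - 1 :=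
    (frequently_digits_ne (by norm_num) hx).mono fun _ => val_doubleDigit_ne_two
  have hda := digits_ofDigits (by norm_num) ha
  obtain ⟨i, hi⟩ := ha.exists
  refine ⟨ofDigits a, mem_Can0_iff.mpr ⟨⟨ofDigits_nonneg a, ofDigits_lt_one ⟨i, hi⟩⟩,
    fun n => by rw [hda]; exact doubleDigit_ne_one _⟩, ?_⟩
  simp only [cantorFunction, hda, a, halveDigit_doubleDigit]
  exact ofDigits_digits (by norm_num) hx

def can0Cylinder (n : ℕ) (w : Fin n → Fin 2) : Set ℝ :=
  {q ∈ Can0 | ∀ i : Fin n, digits q 3 i = doubleDigit (w i)}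

theorem Can0_subset_iUnion_can0Cylinder (n : ℕ) : Can0 ⊆ ⋃ w, can0Cylinder n w := fun q hq =>
  mem_iUnion.mpr ⟨fun i => halveDigit (digits q 3 i),
    hq, fun i => (doubleDigit_halveDigit ((mem_Can0_iff.mp hq).2 i)).symm⟩

theorem ediam_can0Cylinder_le (n : ℕ) (w : Fin n → Fin 2) :
    ediam (can0Cylinder n w) ≤ ENNReal.ofReal ((3 : ℝ) ^ n)⁻¹ := by
  refine ediam_le fun q hq q' hq' => ?_
  rw [edist_dist, Real.dist_eq]
  refine ENNReal.ofReal_le_ofReal ?_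
  have := abs_ofDigits_sub_ofDigits_le (b := 3) (n := n) (x := digits q 3) (y := digits q' 3)
    fun i hi => (hq.2 ⟨i, hi⟩).trans (hq'.2 ⟨i, hi⟩).symm
  rwa [ofDigits_digits (by norm_num) (mem_Can0_iff.mp hq.1).1,
    ofDigits_digits (by norm_num) (mem_Can0_iff.mp hq'.1).1, Nat.cast_ofNat] at this

theorem dimH_Can0_prod_le : dimH (Can0 ×ˢ Can0 : Set (ℝ × ℝ)) ≤ ENNReal.ofReal (logb 3 4) := by
  have := dimH_le_of_forall_covering (s := Can0 ×ˢ Can0) (m := 3) (N := 4) (by norm_num)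
    (fun n (w : (Fin n → Fin 2) × (Fin n → Fin 2)) => can0Cylinder n w.1 ×ˢ can0Cylinder n w.2)
    (fun n => by simp [Fintype.card_prod, ← mul_pow])
    (fun n w => ediam_le fun p hp p' hp' => by
      rw [Prod.edist_eq]
      exact max_le ((edist_le_ediam_of_mem hp.1 hp'.1).trans (ediam_can0Cylinder_le n w.1))
        ((edist_le_ediam_of_mem hp.2 hp'.2).trans (ediam_can0Cylinder_le n w.2)))
    (fun n => by
      rintro ⟨q, q'⟩ ⟨hq, hq'⟩
      obtain ⟨w, hw⟩ := mem_iUnion.mp (Can0_subset_iUnion_can0Cylinder n hq)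
      obtain ⟨w', hw'⟩ := mem_iUnion.mp (Can0_subset_iUnion_can0Cylinder n hq')
      exact mem_iUnion.mpr ⟨(w, w'), hw, hw'⟩)
  simpa using this

theorem le_dimH_Can0_prod :
    ENNReal.ofReal (2 * logb 3 2) ≤ dimH (Can0 ×ˢ Can0 : Set (ℝ × ℝ)) := by
  set α := (logb 3 2).toNNReal
  have hα : 0 < α := Real.toNNReal_pos.mpr (Real.logb_pos (by norm_num) (by norm_num))
  have hsquare : dimH (Ico (0 : ℝ) 1 ×ˢ Ico (0 : ℝ) 1) = 2 := by
    rw [Real.dimH_of_nonempty_interior, Module.finrank_prod, Module.finrank_self]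
    · norm_num
    · refine ⟨(1 / 2, 1 / 2), interior_maximal (Set.prod_mono Ioo_subset_Ico_self
        Ioo_subset_Ico_self) (isOpen_Ioo.prod isOpen_Ioo) ?_⟩
      norm_num
  have himage : Ico (0 : ℝ) 1 ×ˢ Ico (0 : ℝ) 1 ⊆ Prod.map cantorFunction cantorFunction ''
      (Can0 ×ˢ Can0) := by
    have := Set.prod_mono Ico_subset_image_cantorFunction Ico_subset_image_cantorFunction
    rwa [prod_image_image_eq] at this
  have h2 : (2 : ℝ≥0∞) ≤ dimH (Can0 ×ˢ Can0 : Set (ℝ × ℝ)) / α := calc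
    (2 : ℝ≥0∞) = dimH (Ico (0 : ℝ) 1 ×ˢ Ico (0 : ℝ) 1) := hsquare.symm
    _ ≤ dimH (Prod.map cantorFunction cantorFunction '' (Can0 ×ˢ Can0)) := dimH_mono himage
    _ ≤ dimH (Can0 ×ˢ Can0 : Set (ℝ × ℝ)) / α :=
      (cantorFunction_holderOnWith.prodMap cantorFunction_holderOnWith).dimH_image_le hα
  rw [ENNReal.le_div_iff_mul_le (.inl (by simpa using hα.ne')) (.inl ENNReal.coe_ne_top)] at h2
  rwa [ENNReal.ofReal_mul zero_le_two, ENNReal.ofReal_ofNat]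

/-- the Hausdorff dimension of the trapped set `Can₀ × Can₀ ⊆ ℝ²`
equals `2·log 2 / log 3`. -/
theorem stmt_15 :
    dimH (Can0 ×ˢ Can0 : Set (ℝ × ℝ)) =
      ENNReal.ofReal (2 * Real.log 2 / Real.log 3) := by
  have hlog4 : Real.logb 3 4 = 2 * Real.log 2 / Real.log 3 := by
    rw [Real.logb, show (4 : ℝ) = 2 ^ 2 by norm_num, Real.log_pow, Nat.cast_ofNat]
  have hlog2 : 2 * Real.logb 3 2 = 2 * Real.log 2 / Real.log 3 := by
    rw [Real.logb, mul_div_assoc]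
  exact le_antisymm (hlog4 ▸ dimH_Can0_prod_le) (hlog2 ▸ le_dimH_Can0_prod)
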